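/- Let U, V ∈ ℝ_max^{m×n}, b, d ∈ ℝ_max^m, p ∈ ℝ_max^n and q ∈ (ℝ ∪ {+∞})^n, and suppose every finite entry of U, V, b, d, p, q is an integer. Define Λ = { λ ∈ ℝ : ∃ x ∈ ℝ^n such that p_i ≤ λ + x_i for all i, x_i ≤ λ + q_i for all i with q_i ∈ ℝ, and max( max_j (u_{ij} + x_j), b_i ) ≤ max( max_j (v_{ij} + x_j), d_i ) for all i }. If Λ is nonempty and bounded below, then λ* := inf Λ satisfies 2λ* ∈ ℤ, i.e., the optimal value of the tropical pseudolinear optimization problem with integer data is an integer multiple of 1/2. -/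

import Mathlib

/-!
If `x` witnesses `λ ∈ Λ` and `φ : ℝ → ℝ` is monotone, commutes with integer translations and
fixes `0`, then `φ ∘ x` witnesses `μ ∈ Λ` as soon as `φ λ ≤ μ` and `-μ ≤ φ (-λ)`: with integer
data, `φ` (extended to `EReal` by fixing `⊥` and `⊤`) commutes with every max-plus expression of
the problem, and the bounds `p_i - λ ≤ x_i ≤ λ + q_i` turn into `p_i - μ ≤ φ x_i ≤ μ + q_i`.
The map `φ t = (⌊t + λ⌋ + ⌈t - λ⌉) / 2` sends `±λ` to `±⌊2λ⌋ / 2`, so `Λ` is closed under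
`λ ↦ ⌊2λ⌋ / 2`. Hence the infimum of `Λ` is the least half-integer in `Λ`.
-/

namespace TropicalPseudolinear

theorem exists_int_two_mul_csInf_eq {Λ : Set ℝ} (hne : Λ.Nonempty) (hbdd : BddBelow Λ)
    (hround : ∀ lam ∈ Λ, (⌊2 * lam⌋ / 2 : ℝ) ∈ Λ) : ∃ z : ℤ, 2 * sInf Λ = z := by
  obtain ⟨lb, hlb⟩ := hbdd
  obtain ⟨lam₀, hlam₀⟩ := hne
  obtain ⟨k, hk, hk_min⟩ := Int.exists_least_of_bdd (P := fun k : ℤ => (k / 2 : ℝ) ∈ Λ)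
    ⟨⌊2 * lb⌋, fun k hk => Int.floor_le_iff.mpr (by linarith [hlb hk])⟩
    ⟨_, hround lam₀ hlam₀⟩
  have hleast : IsLeast Λ (k / 2) := by
    refine ⟨hk, fun lam hlam => ?_⟩
    have h₁ : (k : ℝ) ≤ ⌊2 * lam⌋ := by exact_mod_cast hk_min _ (hround lam hlam)
    have h₂ : (⌊2 * lam⌋ : ℝ) ≤ 2 * lam := Int.floor_le _
    linarith
  exact ⟨k, by rw [hleast.csInf_eq]; ring⟩

noncomputable def halfRound (lam : ℝ) : CircleDeg1Lift where
  toFun x := (⌊x + lam⌋ + ⌈x - lam⌉) / 2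
  monotone' x y h := by
    dsimp only
    gcongr
  map_add_one' x := by
    rw [add_right_comm, sub_eq_add_neg, add_right_comm x 1, Int.floor_add_one, Int.ceil_add_one,
      ← sub_eq_add_neg]
    push_cast
    ring

section HalfRound

variable (lam : ℝ)

theorem halfRound_apply (x : ℝ) : halfRound lam x = (⌊x + lam⌋ + ⌈x - lam⌉) / 2 := rfl

theorem halfRound_zero : halfRound lam 0 = 0 := by
  rw [halfRound_apply, zero_sub, Int.ceil_neg, zero_add]
  simp

theorem halfRound_self : halfRound lam lam = ⌊2 * lam⌋ / 2 := by
  rw [halfRound_apply, sub_self, ← two_mul]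
  simp

theorem halfRound_neg_self : halfRound lam (-lam) = -(⌊2 * lam⌋ / 2) := by
  rw [halfRound_apply, neg_add_cancel, ← neg_add', ← two_mul, Int.ceil_neg]
  simp
  ring

end HalfRound

def IsIntOrBot (c : EReal) : Prop := c ≠ ⊥ → ∃ z : ℤ, c = ((z : ℝ) : EReal)

def extendEReal (f : ℝ → ℝ) : EReal → EReal := WithBot.map (WithTop.map f)

section ExtendEReal

variable {f : ℝ → ℝ}

@[simp] theorem extendEReal_bot : extendEReal f ⊥ = ⊥ := rfl

@[simp] theorem extendEReal_coe (r : ℝ) : extendEReal f r = (f r : EReal) := rfl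

theorem monotone_extendEReal (hf : Monotone f) : Monotone (extendEReal f) :=
  hf.withTop_map.withBot_map

theorem extendEReal_iSup {κ : Type*} [Fintype κ] (hf : Monotone f) (g : κ → EReal) :
    extendEReal f (⨆ j, g j) = ⨆ j, extendEReal f (g j) := by
  rw [← Finset.sup_univ_eq_iSup, ← Finset.sup_univ_eq_iSup,
    Finset.apply_sup_eq_sup_comp_of_linearOrder _ (monotone_extendEReal hf) rfl]
  rfl

end ExtendEReal

section CircleDeg1Lift

variable (f : CircleDeg1Lift)

theorem extendEReal_add_coe {c : EReal} (hc : IsIntOrBot c) (r : ℝ) :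
    extendEReal f (c + r) = c + f r := by
  rcases eq_or_ne c ⊥ with rfl | hc'
  · simp
  obtain ⟨z, rfl⟩ := hc hc'
  rw [← EReal.coe_add, extendEReal_coe, f.map_int_add, EReal.coe_add]

theorem extendEReal_eq_self (hf : f 0 = 0) {c : EReal} (hc : IsIntOrBot c) :
    extendEReal f c = c := by
  simpa [hf] using extendEReal_add_coe f hc 0

theorem extendEReal_iSup_add_sup {κ : Type*} [Fintype κ] (hf : f 0 = 0)
    {A : κ → EReal} {c : EReal} (hA : ∀ j, IsIntOrBot (A j)) (hc : IsIntOrBot c) (x : κ → ℝ) :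
    extendEReal f ((⨆ j, A j + x j) ⊔ c) = (⨆ j, A j + (f (x j) : EReal)) ⊔ c := by
  rw [(monotone_extendEReal f.monotone).map_max, extendEReal_iSup f.monotone,
    extendEReal_eq_self f hf hc]
  simp only [extendEReal_add_coe f (hA _)]

end CircleDeg1Lift

variable {ι κ : Type*} [Fintype κ]

def Feasible (U V : ι → κ → EReal) (b d : ι → EReal) (p q : κ → EReal) (lam : ℝ) : Prop :=
  ∃ x : κ → ℝ,
    (∀ j, p j ≤ (lam : EReal) + (x j : EReal)) ∧
    (∀ j, q j ≠ ⊤ → (x j : EReal) ≤ (lam : EReal) + q j) ∧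
    (∀ i, ((⨆ j, U i j + (x j : EReal)) ⊔ b i) ≤ ((⨆ j, V i j + (x j : EReal)) ⊔ d i))

section Feasible

variable {U V : ι → κ → EReal} {b d : ι → EReal} {p q : κ → EReal}
  (hU : ∀ i j, IsIntOrBot (U i j)) (hV : ∀ i j, IsIntOrBot (V i j))
  (hb : ∀ i, IsIntOrBot (b i)) (hd : ∀ i, IsIntOrBot (d i))
  (hp : ∀ j, IsIntOrBot (p j)) (hq : ∀ j, q j ≠ ⊤ → ∃ z : ℤ, q j = ((z : ℝ) : EReal))

include hU hV hb hd hp hq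

theorem Feasible.of_circleDeg1Lift {lam μ : ℝ} (h : Feasible U V b d p q lam)
    (f : CircleDeg1Lift) (hf : f 0 = 0) (hle : f lam ≤ μ) (hge : -μ ≤ f (-lam)) :
    Feasible U V b d p q μ := by
  obtain ⟨x, hpx, hqx, hx⟩ := h
  refine ⟨fun j => f (x j), fun j => ?_, fun j hqj => ?_, fun i => ?_⟩
  · rcases eq_or_ne (p j) ⊥ with hpj | hpj
    · simp [hpj]
    obtain ⟨z, hz⟩ := hp j hpj
    have hxj := hpx j
    rw [hz] at hxj ⊢
    norm_cast at hxj ⊢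
    have := f.monotone (show (z : ℝ) + -lam ≤ x j by linarith)
    rw [f.map_int_add] at this
    linarith
  · obtain ⟨z, hz⟩ := hq j hqj
    have hxj := hqx j hqj
    rw [hz] at hxj ⊢
    norm_cast at hxj ⊢
    have := f.monotone (show x j ≤ z + lam by linarith)
    rw [f.map_int_add] at this
    linarith
  · rw [← extendEReal_iSup_add_sup f hf (hU i) (hb i),
      ← extendEReal_iSup_add_sup f hf (hV i) (hd i)]
    exact monotone_extendEReal f.monotone (hx i)

theorem Feasible.floor_two_mul_div_two {lam : ℝ} (h : Feasible U V b d p q lam) :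
    Feasible U V b d p q (⌊2 * lam⌋ / 2) :=
  h.of_circleDeg1Lift hU hV hb hd hp hq (halfRound lam) (halfRound_zero lam)
    (halfRound_self lam).le (halfRound_neg_self lam).ge

end Feasible

end TropicalPseudolinear

theorem stmt11 (m n : ℕ) (U V : Fin m → Fin n → EReal) (b d : Fin m → EReal)
    (p q : Fin n → EReal)
    (hUint : ∀ i j, U i j ≠ ⊥ → ∃ z : ℤ, U i j = ((z : ℝ) : EReal))
    (hVint : ∀ i j, V i j ≠ ⊥ → ∃ z : ℤ, V i j = ((z : ℝ) : EReal))
    (hbint : ∀ i, b i ≠ ⊥ → ∃ z : ℤ, b i = ((z : ℝ) : EReal))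
    (hdint : ∀ i, d i ≠ ⊥ → ∃ z : ℤ, d i = ((z : ℝ) : EReal))
    (hpint : ∀ i, p i ≠ ⊥ → ∃ z : ℤ, p i = ((z : ℝ) : EReal))
    (hqint : ∀ i, q i ≠ ⊤ → ∃ z : ℤ, q i = ((z : ℝ) : EReal))
    (Λ : Set ℝ)
    (hΛ : Λ = {lam : ℝ | ∃ x : Fin n → ℝ,
        (∀ i, p i ≤ (lam : EReal) + (x i : EReal)) ∧
        (∀ i, q i ≠ ⊤ → (x i : EReal) ≤ (lam : EReal) + q i) ∧
        (∀ i, ((⨆ j, U i j + (x j : EReal)) ⊔ b i) ≤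
              ((⨆ j, V i j + (x j : EReal)) ⊔ d i))})
    (hne : Λ.Nonempty) (hbdd : BddBelow Λ) :
    ∃ z : ℤ, 2 * sInf Λ = (z : ℝ) := by
  subst hΛ
  exact TropicalPseudolinear.exists_int_two_mul_csInf_eq hne hbdd fun _ h =>
    TropicalPseudolinear.Feasible.floor_two_mul_div_two hUint hVint hbint hdint hpint hqint h
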